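/- Let V be a finitely generated free module over a commutative ring k with basis (b_i). For a tuple I = (d_1,…,d_n) of positive integers with Σ d_i = d and distinct basis elements b_{i_1},…,b_{i_n}, set (b_{i_1},…,b_{i_n},I) := Σ_{σ ∈ S_d/S_I} σ·(b_{i_1}^{⊗d_1} ⊗ ⋯ ⊗ b_{i_n}^{⊗d_n}), where S_I = Π S_{d_i} ⊆ S_d. Then these elements form a k-basis of the invariant module (V^{⊗d})^{S_d}. -/

import Mathlib

/-!
STATEMENT 1: Let `V` be a finitely generated free module over a commutative ring `k`, with basis
`(b_i)`.  For a tuple `I = (d_1,…,d_n)` of positive integers with `Σ d_i = d` and distinct basis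
elements `b_{i_1},…,b_{i_n}`, the element `(b_{i_1},…,b_{i_n},I)` is the orbit sum under `S_d` of
the pure tensor with `b_{i_s}` in the `d_s` positions of block `s`.  These orbit sums form a
`k`-basis of the invariant module `(V^{⊗d})^{S_d}`.

We encode a tuple `(b_{i_1},…,b_{i_n},I)` by the function `f : Fin d → ι` whose fibers are the
blocks; the associated element is the sum of the pure tensors `⊗ b_{g(i)}` over the `S_d`-orbit
of `f` (i.e. over all `g = f ∘ σ`).  "The elements form a basis" is formalized as: the set of
all these orbit sums is linearly independent and spans the invariant submodule `(V^{⊗d})^{S_d}`.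
-/

open TensorProduct PiTensorProduct

variable (k : Type) [CommRing k]

/-- The action of a permutation `σ ∈ S_d` on the `d`-th tensor power of `V`. -/
noncomputable def permTensorMap (d : ℕ) (V : Type) [AddCommGroup V] [Module k V]
    (σ : Equiv.Perm (Fin d)) :
    (⨂[k] (_ : Fin d), V) →ₗ[k] (⨂[k] (_ : Fin d), V) :=
  (PiTensorProduct.reindex k (fun _ : Fin d => V) σ).toLinearMap

/-- `Γ^d(V) = (V^{⊗d})^{S_d}`, the invariants of the symmetric group acting on the tensor
power by permuting the factors. -/
noncomputable def dividedPower (d : ℕ) (V : Type) [AddCommGroup V] [Module k V] :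
    Submodule k (⨂[k] (_ : Fin d), V) :=
  ⨅ σ : Equiv.Perm (Fin d), LinearMap.ker (permTensorMap k d V σ - LinearMap.id)

open scoped Classical in
/-- The orbit sum `(b_{i_1},…,b_{i_n},I) = Σ_{σ ∈ S_d/S_I} σ·(b_{i_1}^{⊗d_1} ⊗ ⋯ ⊗ b_{i_n}^{⊗d_n})`
associated to `f : Fin d → ι`: the sum of the distinct pure tensors in the `S_d`-orbit
of `⊗_{i} b_{f i}`. -/
noncomputable def orbitSum (d : ℕ) {V : Type} [AddCommGroup V] [Module k V]
    {ι : Type} [Fintype ι] (b : Module.Basis ι k V) (f : Fin d → ι) :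
    ⨂[k] (_ : Fin d), V :=
  ∑ g ∈ Finset.univ.filter (fun g : Fin d → ι => ∃ σ : Equiv.Perm (Fin d), g = f ∘ σ),
    PiTensorProduct.tprod k (fun i => b (g i))

/-! In the basis of pure tensors `⊗ b (g i)` of `V^{⊗d}`, indexed by `g : Fin d → ι`, a permutation
`σ` sends the basis vector of `g` to that of `g ∘ σ⁻¹`. Hence a tensor is invariant iff its
coordinates are constant on the orbits of `S_d` on `Fin d → ι`, and this is exactly the span of the
orbit sums; they are independent because the coordinate at a chosen orbit representative picks out
its own orbit sum. Neither step uses more than a basis and an equivalence relation on its index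
set. -/

open Module Finset

section ClassSum

variable {R M α : Type*} [CommRing R] [AddCommGroup M] [Module R M] [Fintype α]
  (B : Basis α R M) (s : Setoid α)

open scoped Classical in
noncomputable def Module.Basis.classSum (a : α) : M :=
  ∑ a' ∈ univ.filter (s a ·), B a'

namespace Module.Basis

open scoped Classical in
theorem repr_classSum (a a' : α) : B.repr (B.classSum s a) a' = if s a a' then 1 else 0 := by
  simp [classSum, map_sum, Finsupp.single_apply, Finset.sum_ite_eq']

theorem classSum_eq_of_rel {a a' : α} (h : s a a') : B.classSum s a = B.classSum s a' :=
  B.ext_elem fun c => by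
    classical
    simp only [repr_classSum]
    exact if_congr ⟨s.trans (s.symm h), s.trans h⟩ rfl rfl

theorem linearIndependent_classSum :
    LinearIndependent R (Quotient.lift (B.classSum s) fun _ _ => B.classSum_eq_of_rel s) := by
  refine .of_pairwise_dual_eq_zero_one _ (fun q => B.coord q.out) (fun q q' hne => ?_) fun q => ?_
  · induction q' using Quotient.inductionOn with | h a => ?_
    have : ¬ s a q.out := fun h => hne (by rw [← q.out_eq]; exact Quotient.sound (s.symm h))
    simp [repr_classSum, this]
  · induction q using Quotient.inductionOn with | h a =>
    have h : s a ⟦a⟧.out := s.symm (Quotient.mk_out a)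
    simp [repr_classSum, h]

theorem linearIndepOn_range_classSum : LinearIndepOn R id (Set.range (B.classSum s)) :=
  (B.linearIndependent_classSum s).linearIndepOn_id' (Set.range_quotient_lift _)

theorem mem_span_range_classSum_iff {x : M} :
    x ∈ Submodule.span R (Set.range (B.classSum s)) ↔
      ∀ a a', s a a' → B.repr x a = B.repr x a' := by
  classical
  constructor
  · intro hx
    induction hx using Submodule.span_induction with
    | mem _ hy =>
      obtain ⟨c, rfl⟩ := hy
      intro a a' h
      simp only [repr_classSum]
      exact if_congr ⟨fun h' => s.trans h' h, fun h' => s.trans h' (s.symm h)⟩ rfl rfl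
    | zero => simp
    | add _ _ _ _ hy hz => intro a a' h; simp [hy a a' h, hz a a' h]
    | smul c _ _ hy => intro a a' h; simp [hy a a' h]
  · intro hx
    have hsum : x = ∑ q : Quotient s, B.repr x q.out • B.classSum s q.out := by
      refine B.ext_elem fun a => ?_
      have hrel : ∀ q : Quotient s, s q.out a ↔ q = ⟦a⟧ := fun q => by
        conv_rhs => rw [← q.out_eq]
        exact Quotient.eq.symm
      simp only [map_sum, map_smul, Finsupp.coe_finsetSum, Finsupp.coe_smul, Finset.sum_apply,
        Pi.smul_apply, repr_classSum, hrel, smul_eq_mul, mul_ite, mul_one, mul_zero,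
        Finset.sum_ite_eq', Finset.mem_univ, if_true]
      exact (hx _ _ (Quotient.mk_out a)).symm
    rw [hsum]
    exact Submodule.sum_mem _ fun q _ =>
      Submodule.smul_mem _ _ (Submodule.subset_span (Set.mem_range_self _))

end Module.Basis

end ClassSum

def precompSetoid (n ι : Type*) : Setoid (n → ι) where
  r f g := ∃ σ : Equiv.Perm n, g = f ∘ σ
  iseqv :=
    { refl := fun _ => ⟨1, rfl⟩
      symm := fun ⟨σ, h⟩ => ⟨σ.symm, by rw [h, Function.comp_assoc, Equiv.self_comp_symm]; rfl⟩
      trans := fun ⟨σ, h⟩ ⟨τ, h'⟩ => ⟨τ.trans σ, by rw [h', h]; rfl⟩ }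

section TensorPower

variable {k} {d : ℕ} {V : Type} [AddCommGroup V] [Module k V] {ι : Type}

theorem mem_dividedPower_iff {x : ⨂[k] (_ : Fin d), V} :
    x ∈ dividedPower k d V ↔ ∀ σ, permTensorMap k d V σ x = x := by
  simp [dividedPower, sub_eq_zero]

theorem permTensorMap_tprod (σ : Equiv.Perm (Fin d)) (v : Fin d → V) :
    permTensorMap k d V σ (tprod k v) = tprod k (v ∘ σ.symm) := by
  simp [permTensorMap, reindex_tprod]; rfl

theorem repr_permTensorMap (b : Basis ι k V) (σ : Equiv.Perm (Fin d))
    (x : ⨂[k] (_ : Fin d), V) (g : Fin d → ι) :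
    (Basis.piTensorProduct fun _ => b).repr (permTensorMap k d V σ x) g =
      (Basis.piTensorProduct fun _ => b).repr x (g ∘ σ) := by
  classical
  set B := Basis.piTensorProduct fun _ : Fin d => b
  suffices (B.coord g).comp (permTensorMap k d V σ) = B.coord (g ∘ σ) from
    LinearMap.congr_fun this x
  refine B.ext fun h => ?_
  have hperm : permTensorMap k d V σ (B h) = B (h ∘ σ.symm) := by
    simp only [B, Basis.piTensorProduct_apply, permTensorMap_tprod]; rfl
  simp [hperm, Finsupp.single_apply, Equiv.comp_symm_eq]

theorem mem_dividedPower_iff_repr (b : Basis ι k V) {x : ⨂[k] (_ : Fin d), V} :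
    x ∈ dividedPower k d V ↔ ∀ (g : Fin d → ι) (σ : Equiv.Perm (Fin d)),
      (Basis.piTensorProduct fun _ => b).repr x (g ∘ σ) =
        (Basis.piTensorProduct fun _ => b).repr x g := by
  simp only [mem_dividedPower_iff, (Basis.piTensorProduct fun _ => b).ext_elem_iff,
    repr_permTensorMap]
  exact forall_comm

theorem orbitSum_eq_classSum [Fintype ι] (b : Basis ι k V) :
    orbitSum k d b = (Basis.piTensorProduct fun _ => b).classSum (precompSetoid (Fin d) ι) := by
  funext f
  simp only [orbitSum, Basis.classSum, Basis.piTensorProduct_apply]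
  -- the two filters use different `Decidable` instances for the same predicate
  congr 1
  convert rfl using 2
  exact Iff.rfl

end TensorPower

/-- The orbit sums of pure tensors of basis vectors form a `k`-basis of the
module of symmetric tensors `(V^{⊗d})^{S_d}`: they span it and are linearly independent. -/
theorem statement1 (d : ℕ) (V : Type) [AddCommGroup V] [Module k V]
    (ι : Type) [Fintype ι] (b : Module.Basis ι k V) :
    Submodule.span k (Set.range (orbitSum k d b)) = dividedPower k d V ∧
      LinearIndependent k ((↑) : (Set.range (orbitSum k d b)) → ⨂[k] (_ : Fin d), V) := by
  rw [orbitSum_eq_classSum]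
  refine ⟨Submodule.ext fun x => ?_, Basis.linearIndepOn_range_classSum _ _⟩
  rw [Basis.mem_span_range_classSum_iff, mem_dividedPower_iff_repr b]
  exact ⟨fun h g σ => (h g _ ⟨σ, rfl⟩).symm, fun h f _ ⟨σ, hg⟩ => hg ▸ (h f σ).symm⟩
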